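/- arXiv:2104.13679 — 3 statements merged into one kernel-verified Lean document; each statement's English description precedes it below -/
import Mathlib

section
/- There is a surjective group homomorphism from the n-fruit cactus group J_n onto the symmetric group S_n sending each generator s_{i,j} to the longest permutation θ_{i,j} of the interval [i,j] (i.e., the permutation reversing i, i+1, ..., j and fixing all other points). -/
/-- Relators of the `n`-fruit cactus group, with generators indexed by pairs
`(i, j)` of naturals.  Only pairs with `1 ≤ i < j ≤ n` are genuine generators;
all other generators are killed by a relation. -/
def cactusRels (n : ℕ) : Set (FreeGroup (ℕ × ℕ)) :=
  {r | (∃ i j, 1 ≤ i ∧ i < j ∧ j ≤ n ∧ r = (FreeGroup.of (i, j)) ^ 2) ∨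
       (∃ i j k l, 1 ≤ i ∧ i < j ∧ j ≤ n ∧ 1 ≤ k ∧ k < l ∧ l ≤ n ∧ (j < k ∨ l < i) ∧
          r = FreeGroup.of (i, j) * FreeGroup.of (k, l) *
              (FreeGroup.of (i, j))⁻¹ * (FreeGroup.of (k, l))⁻¹) ∨
       (∃ i j k l, 1 ≤ i ∧ i < j ∧ j ≤ n ∧ i ≤ k ∧ k < l ∧ l ≤ j ∧
          r = FreeGroup.of (i, j) * FreeGroup.of (k, l) *
              (FreeGroup.of (i, j))⁻¹ * (FreeGroup.of (i + j - l, i + j - k))⁻¹) ∨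
       (∃ i j, ¬(1 ≤ i ∧ i < j ∧ j ≤ n) ∧ r = FreeGroup.of (i, j))}

/-- The `n`-fruit cactus group `J_n`. -/
abbrev CactusGroup (n : ℕ) := PresentedGroup (cactusRels n)

/-- The generator `s_{i,j}` of `J_n`. -/
def cactusGen (n : ℕ) (i j : ℕ) : CactusGroup n := PresentedGroup.of (i, j)

/-- The underlying function of the interval-reversing permutation `θ_{i,j}` of
`S_n = Perm (Fin n)`; here `Fin n` is `0`-indexed, representing the point
`x ∈ {1, …, n}` by `x - 1 : Fin n`.  For `1 ≤ i` and `i ≤ x ≤ j ≤ n` (in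
`1`-indexed terms) it sends `x` to `i + j - x`, and fixes all other points. -/
def thetaFun (n i j : ℕ) (x : Fin n) : Fin n :=
  if h : 1 ≤ i ∧ i ≤ x.val + 1 ∧ x.val + 1 ≤ j ∧ j ≤ n then ⟨i + j - x.val - 2, by omega⟩
  else x

theorem thetaFun_involutive (n i j : ℕ) : Function.Involutive (thetaFun n i j) := by
  intro x
  rw [Fin.ext_iff]
  simp only [thetaFun, apply_dite, Fin.val_mk]
  split_ifs <;> omega

/-- The longest permutation `θ_{i,j}` of the interval `[i,j]`, as an element of `S_n`. -/
def theta (n i j : ℕ) : Equiv.Perm (Fin n) :=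
  Function.Involutive.toPerm (thetaFun n i j) (thetaFun_involutive n i j)

/-!
The reversals `θ_{i,j}` are involutions, reversals of disjoint intervals commute, and conjugating
`θ_{k,l}` by `θ_{i,j}` for `[k,l] ⊆ [i,j]` gives the reversal of the mirrored interval
`[i+j-l, i+j-k]`; so `s_{i,j} ↦ θ_{i,j}` respects the cactus relations. The image contains the
adjacent transpositions `θ_{k,k+1}`, which generate `S_n`.
-/

open Equiv

lemma theta_apply (n i j : ℕ) (x : Fin n) : theta n i j x = thetaFun n i j x := rfl

lemma theta_mul_self (n i j : ℕ) : theta n i j * theta n i j = 1 := by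
  ext x
  simp [Perm.mul_apply, theta_apply, thetaFun_involutive n i j x]

lemma theta_inv (n i j : ℕ) : (theta n i j)⁻¹ = theta n i j :=
  inv_eq_of_mul_eq_one_right (theta_mul_self n i j)

lemma theta_mul_comm_of_disjoint (n i j k l : ℕ) (h : j < k ∨ l < i) :
    theta n i j * theta n k l = theta n k l * theta n i j := by
  ext x
  simp only [Perm.mul_apply, theta_apply, thetaFun, apply_dite Fin.val]
  split_ifs <;> omega

lemma theta_conj_of_le (n i j k l : ℕ) (hi : 1 ≤ i) (hik : i ≤ k) (hkl : k < l) (hlj : l ≤ j)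
    (hj : j ≤ n) :
    theta n i j * theta n k l * theta n i j = theta n (i + j - l) (i + j - k) := by
  ext x
  simp only [Perm.mul_apply, theta_apply, thetaFun, apply_dite Fin.val]
  split_ifs <;> omega

lemma theta_eq_swap_castSucc_succ (m : ℕ) (k : Fin m) :
    theta (m + 1) (k.val + 1) (k.val + 2) = swap k.castSucc k.succ := by
  ext x
  simp only [theta_apply, thetaFun, swap_apply_def, apply_dite Fin.val, apply_ite Fin.val,
    Fin.val_castSucc, Fin.val_succ, Fin.ext_iff]
  split_ifs <;> omega

lemma Equiv.Perm.surjective_of_swap_castSucc_succ_mem_range {G : Type*} [Group G] {m : ℕ}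
    (ψ : G →* Perm (Fin (m + 1))) (h : ∀ k : Fin m, swap k.castSucc k.succ ∈ ψ.range) :
    Function.Surjective ψ := by
  rw [← MonoidHom.range_eq_top, eq_top_iff,
    ← Subgroup.closure_eq_top_of_mclosure_eq_top (Perm.mclosure_swap_castSucc_succ m),
    Subgroup.closure_le]
  rintro _ ⟨k, rfl⟩
  exact h k

open Classical in
/-- The non-generators `(i, j)`, which the presentation kills, are sent to `1`. -/
noncomputable def cactusGenImage (n : ℕ) (p : ℕ × ℕ) : Perm (Fin n) :=
  if 1 ≤ p.1 ∧ p.1 < p.2 ∧ p.2 ≤ n then theta n p.1 p.2 else 1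

lemma cactusGenImage_of_lt {n i j : ℕ} (hi : 1 ≤ i) (hij : i < j) (hj : j ≤ n) :
    cactusGenImage n (i, j) = theta n i j :=
  if_pos ⟨hi, hij, hj⟩

lemma lift_cactusGenImage_eq_one {n : ℕ} :
    ∀ r ∈ cactusRels n, FreeGroup.lift (cactusGenImage n) r = 1 := by
  rintro r (⟨i, j, hi, hij, hj, rfl⟩ | ⟨i, j, k, l, hi, hij, hj, hk, hkl, hl, hdisj, rfl⟩ |
    ⟨i, j, k, l, hi, hij, hj, hik, hkl, hlj, rfl⟩ | ⟨i, j, hbad, rfl⟩)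
  · rw [map_pow, FreeGroup.lift_apply_of, cactusGenImage_of_lt hi hij hj, sq, theta_mul_self]
  · simp only [map_mul, map_inv, FreeGroup.lift_apply_of, cactusGenImage_of_lt hi hij hj,
      cactusGenImage_of_lt hk hkl hl, theta_inv]
    rw [theta_mul_comm_of_disjoint n i j k l hdisj, mul_assoc (theta n k l),
      theta_mul_self, mul_one, theta_mul_self]
  · have hmirror : 1 ≤ i + j - l ∧ i + j - l < i + j - k ∧ i + j - k ≤ n := by omega
    simp only [map_mul, map_inv, FreeGroup.lift_apply_of, cactusGenImage_of_lt hi hij hj,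
      cactusGenImage_of_lt (hi.trans hik) hkl (hlj.trans hj),
      cactusGenImage_of_lt hmirror.1 hmirror.2.1 hmirror.2.2, theta_inv,
      theta_conj_of_le n i j k l hi hik hkl hlj hj, theta_mul_self]
  · exact (FreeGroup.lift_apply_of).trans (if_neg hbad)

noncomputable def cactusToPerm (n : ℕ) : CactusGroup n →* Perm (Fin n) :=
  PresentedGroup.toGroup lift_cactusGenImage_eq_one

lemma cactusToPerm_cactusGen {n i j : ℕ} (hi : 1 ≤ i) (hij : i < j) (hj : j ≤ n) :
    cactusToPerm n (cactusGen n i j) = theta n i j :=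
  (PresentedGroup.toGroup.of _).trans (cactusGenImage_of_lt hi hij hj)

lemma cactusToPerm_surjective (n : ℕ) : Function.Surjective (cactusToPerm n) := by
  rcases n with _ | m
  · exact fun _ => ⟨1, Subsingleton.elim _ _⟩
  · refine Perm.surjective_of_swap_castSucc_succ_mem_range _ fun k => ?_
    refine ⟨cactusGen (m + 1) (k.val + 1) (k.val + 2), ?_⟩
    rw [cactusToPerm_cactusGen (by omega) (by omega) (by omega), theta_eq_swap_castSucc_succ]

/-- There is a surjective group homomorphism `J_n → S_n` sending each generator
`s_{i,j}` to the interval reversal `θ_{i,j}`. -/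
theorem cactus_to_symm_surjective (n : ℕ) :
    ∃ ψ : CactusGroup n →* Equiv.Perm (Fin n),
      Function.Surjective ψ ∧
      ∀ i j : ℕ, 1 ≤ i → i < j → j ≤ n → ψ (cactusGen n i j) = theta n i j :=
  ⟨cactusToPerm n, cactusToPerm_surjective n, fun _ _ => cactusToPerm_cactusGen⟩
end

section
/- Let G be a group generated by elements t_1, ..., t_{n−1}, and define q_i := t_1 (t_2 t_1) ⋯ (t_i t_{i−1} ⋯ t_1) for 1 ≤ i ≤ n−1. If each q_i is an involution, then t_1 = q_1, t_2 = q_1 q_2 q_1, and t_i = q_{i−1} q_i q_{i−1} q_{i−2} for i > 2; hence q_1, ..., q_{n−1} also generate G. -/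
/-- The descending word `d_i = t_i t_{i-1} ⋯ t_1` (with `d_0 = 1`). -/
def dword {G : Type*} [Group G] (t : ℕ → G) : ℕ → G
  | 0 => 1
  | (i + 1) => t (i + 1) * dword t i

/-- The element `q_i = t_1 (t_2 t_1) ⋯ (t_i t_{i-1} ⋯ t_1)` (with `q_0 = 1`). -/
def qword {G : Type*} [Group G] (t : ℕ → G) : ℕ → G
  | 0 => 1
  | (i + 1) => qword t i * dword t (i + 1)

/-! Since `q_{i+1} = q_i d_{i+1}` and `d_{i+2} = t_{i+2} d_{i+1}`, each `t_{i+2}` is recovered as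
`d_{i+2} d_{i+1}⁻¹ = (q_{i+1}⁻¹ q_{i+2}) (q_i⁻¹ q_{i+1})⁻¹`, so the `t_i` lie in the subgroup
generated by the `q_i`; when `q_{i+1}` is an involution, its inverse can be dropped. -/

section

variable {G : Type*} [Group G] (t : ℕ → G)

@[simp]
lemma qword_zero : qword t 0 = 1 := rfl

@[simp]
lemma qword_one : qword t 1 = t 1 := by
  simp [qword, dword]

lemma dword_succ_eq_inv_qword_mul_qword (i : ℕ) :
    dword t (i + 1) = (qword t i)⁻¹ * qword t (i + 1) := by
  rw [qword]; group

lemma t_add_two_eq_qword (i : ℕ) :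
    t (i + 2) = (qword t (i + 1))⁻¹ * qword t (i + 2) * (qword t (i + 1))⁻¹ * qword t i := by
  have hq : qword t (i + 2) = qword t (i + 1) * (t (i + 2) * dword t (i + 1)) := rfl
  rw [hq, dword_succ_eq_inv_qword_mul_qword]
  group

lemma qword_mem_closure {m j : ℕ} (hj : j ≤ m) :
    qword t j ∈ Subgroup.closure {g : G | ∃ i, 1 ≤ i ∧ i ≤ m ∧ g = qword t i} := by
  rcases Nat.eq_zero_or_pos j with rfl | hj₀
  · exact one_mem _
  · exact Subgroup.subset_closure ⟨j, hj₀, hj, rfl⟩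

lemma t_mem_closure_qword {m i : ℕ} (hi₁ : 1 ≤ i) (him : i ≤ m) :
    t i ∈ Subgroup.closure {g : G | ∃ i, 1 ≤ i ∧ i ≤ m ∧ g = qword t i} := by
  obtain rfl | ⟨k, rfl⟩ : i = 1 ∨ ∃ k, i = k + 2 := by
    rcases i with _ | _ | k <;> simp_all
  · rw [← qword_one t]
    exact qword_mem_closure t him
  · rw [t_add_two_eq_qword t]
    have hq := fun j (hj : j ≤ k + 2) ↦ qword_mem_closure t (m := m) (hj.trans him)
    exact mul_mem (mul_mem (mul_mem (inv_mem (hq _ (by omega))) (hq _ le_rfl))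
      (inv_mem (hq _ (by omega)))) (hq _ (by omega))

lemma closure_qword_eq_top {m : ℕ}
    (hgen : Subgroup.closure {g : G | ∃ i, 1 ≤ i ∧ i ≤ m ∧ g = t i} = ⊤) :
    Subgroup.closure {g : G | ∃ i, 1 ≤ i ∧ i ≤ m ∧ g = qword t i} = ⊤ := by
  rw [eq_top_iff, ← hgen, Subgroup.closure_le]
  rintro _ ⟨i, hi₁, him, rfl⟩
  exact t_mem_closure_qword t hi₁ him

end

/-- If `G` is generated by `t_1, …, t_{n-1}` and each
`q_i = t_1 (t_2 t_1) ⋯ (t_i ⋯ t_1)` is an involution, then `t_1 = q_1`,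
`t_2 = q_1 q_2 q_1`, and `t_i = q_{i-1} q_i q_{i-1} q_{i-2}` for `i > 2`;
hence `q_1, …, q_{n-1}` also generate `G`. -/
theorem t_in_terms_of_q {G : Type*} [Group G] (n : ℕ) (t : ℕ → G)
    (hgen : Subgroup.closure {g : G | ∃ i, 1 ≤ i ∧ i ≤ n - 1 ∧ g = t i} = ⊤)
    (hinv : ∀ i, 1 ≤ i → i ≤ n - 1 → qword t i * qword t i = 1) :
    (1 ≤ n - 1 → t 1 = qword t 1) ∧
    (2 ≤ n - 1 → t 2 = qword t 1 * qword t 2 * qword t 1) ∧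
    (∀ i, 2 < i → i ≤ n - 1 →
      t i = qword t (i - 1) * qword t i * qword t (i - 1) * qword t (i - 2)) ∧
    Subgroup.closure {g : G | ∃ i, 1 ≤ i ∧ i ≤ n - 1 ∧ g = qword t i} = ⊤ := by
  have hq : ∀ i, 1 ≤ i → i ≤ n - 1 → (qword t i)⁻¹ = qword t i := fun i hi₁ hin ↦
    inv_eq_of_mul_eq_one_right (hinv i hi₁ hin)
  refine ⟨fun _ ↦ (qword_one t).symm, fun hn ↦ ?_, fun i hi hin ↦ ?_, closure_qword_eq_top t hgen⟩
  · rw [t_add_two_eq_qword t 0, hq 1 le_rfl (by omega), qword_zero, mul_one]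
  · obtain ⟨j, rfl⟩ : ∃ j, i = j + 2 := ⟨i - 2, by omega⟩
    rw [t_add_two_eq_qword t, hq (j + 1) (by omega) (by omega)]
    rfl
end

section
/- Suppose G is a group generated by involutions q_1, …, q_{n−1}, and φ: J_n → G is a map on generators defined by φ(s_{1,k}) = q_{k−1} for 2 ≤ k ≤ n and φ(s_{i,j}) = q_{j−1} q_{j−i} q_{j−1} for 1 < i < j ≤ n. If the elements q_{i,j} := q_{j−1} q_{j−i} q_{j−1} satisfy the cactus relations (q_{i,j}² = 1; q_{i,j} q_{k,l} q_{i,j} = q_{i+j−l, i+j−k} for i ≤ k < l ≤ j; q_{i,j} q_{k,l} = q_{k,l} q_{i,j} for j < k), then φ extends to a surjective group homomorphism J_n → G. -/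
/-- The element `q_{i,j} := q_{j-1} q_{j-i} q_{j-1}`. -/
def qq {G : Type*} [Group G] (q : ℕ → G) (i j : ℕ) : G :=
  q (j - 1) * q (j - i) * q (j - 1)

theorem PresentedGroup.range_toGroup {α G : Type*} [Group G] {f : α → G}
    {rels : Set (FreeGroup α)} (h : ∀ r ∈ rels, FreeGroup.lift f r = 1) :
    (PresentedGroup.toGroup h).range = Subgroup.closure (Set.range f) := by
  rw [MonoidHom.range_eq_map, ← PresentedGroup.closure_range_of, MonoidHom.map_closure,
    ← Set.range_comp]
  congr 2
  funext x
  exact PresentedGroup.toGroup.of h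

section CactusImage

variable {G : Type*} [Group G] {n : ℕ} {q : ℕ → G}

theorem qq_one_eq_of_mul_self {j : ℕ} (h : q (j - 1) * q (j - 1) = 1) : qq q 1 j = q (j - 1) := by
  rw [qq, h, one_mul]

variable (n q) in
def cactusImage (p : ℕ × ℕ) : G :=
  if 1 ≤ p.1 ∧ p.1 < p.2 ∧ p.2 ≤ n then qq q p.1 p.2 else 1

theorem cactusImage_eq_qq {i j : ℕ} (h1 : 1 ≤ i) (h2 : i < j) (h3 : j ≤ n) :
    cactusImage n q (i, j) = qq q i j :=
  if_pos ⟨h1, h2, h3⟩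

theorem lift_cactusImage_eq_one
    (hinv : ∀ i j, 1 ≤ i → i < j → j ≤ n → qq q i j * qq q i j = 1)
    (hnest : ∀ i j k l, 1 ≤ i → i ≤ k → k < l → l ≤ j → i < j → j ≤ n →
      qq q i j * qq q k l * qq q i j = qq q (i + j - l) (i + j - k))
    (hdisj : ∀ i j k l, 1 ≤ i → i < j → j < k → k < l → l ≤ n →
      qq q i j * qq q k l = qq q k l * qq q i j) :
    ∀ r ∈ cactusRels n, FreeGroup.lift (cactusImage n q) r = 1 := by
  rintro r (⟨i, j, h1, h2, h3, rfl⟩ | ⟨i, j, k, l, h1, h2, h3, h4, h5, h6, h7, rfl⟩ |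
    ⟨i, j, k, l, h1, h2, h3, h4, h5, h6, rfl⟩ | ⟨i, j, h, rfl⟩)
  · rw [map_pow, FreeGroup.lift_apply_of, cactusImage_eq_qq h1 h2 h3, pow_two]
    exact hinv i j h1 h2 h3
  · have hcomm : qq q i j * qq q k l = qq q k l * qq q i j := by
      rcases h7 with h7 | h7
      · exact hdisj i j k l h1 h2 h7 h5 h6
      · exact (hdisj k l i j h4 h5 h7 h2 h3).symm
    simp only [map_mul, map_inv, FreeGroup.lift_apply_of, cactusImage_eq_qq h1 h2 h3,
      cactusImage_eq_qq h4 h5 h6, hcomm, mul_inv_cancel_right, mul_inv_cancel]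
  · have hij : i < j := by omega
    have hk : 1 ≤ k := by omega
    have hl : l ≤ n := by omega
    have ha : 1 ≤ i + j - l := by omega
    have hb : i + j - l < i + j - k := by omega
    have hc : i + j - k ≤ n := by omega
    have hself_inv {a b : ℕ} (h₁ : 1 ≤ a) (h₂ : a < b) (h₃ : b ≤ n) : (qq q a b)⁻¹ = qq q a b :=
      inv_eq_of_mul_eq_one_right (hinv a b h₁ h₂ h₃)
    simp only [map_mul, map_inv, FreeGroup.lift_apply_of, cactusImage_eq_qq h1 hij h3,
      cactusImage_eq_qq hk h5 hl, cactusImage_eq_qq ha hb hc,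
      hself_inv h1 hij h3, hself_inv ha hb hc, hnest i j k l h1 h4 h5 h6 hij h3]
    exact hinv _ _ ha hb hc
  · exact (FreeGroup.lift_apply_of).trans (if_neg h)

end CactusImage

theorem cactus_hom_exists_general {G : Type*} [Group G] (n : ℕ) (q : ℕ → G)
    (hgen : Subgroup.closure {g : G | ∃ i, 1 ≤ i ∧ i ≤ n - 1 ∧ g = q i} = ⊤)
    (hinvq : ∀ i, 1 ≤ i → i ≤ n - 1 → q i * q i = 1)
    (hinv : ∀ i j, 1 ≤ i → i < j → j ≤ n → qq q i j * qq q i j = 1)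
    (hnest : ∀ i j k l, 1 ≤ i → i ≤ k → k < l → l ≤ j → i < j → j ≤ n →
      qq q i j * qq q k l * qq q i j = qq q (i + j - l) (i + j - k))
    (hdisj : ∀ i j k l, 1 ≤ i → i < j → j < k → k < l → l ≤ n →
      qq q i j * qq q k l = qq q k l * qq q i j) :
    ∃ φ : CactusGroup n →* G,
      Function.Surjective φ ∧
      (∀ k, 2 ≤ k → k ≤ n → φ (cactusGen n 1 k) = q (k - 1)) ∧
      (∀ i j, 1 < i → i < j → j ≤ n → φ (cactusGen n i j) = qq q i j) := by
  have hrel := lift_cactusImage_eq_one hinv hnest hdisj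
  have hq_one {k : ℕ} (hk : 2 ≤ k) (hkn : k ≤ n) : qq q 1 k = q (k - 1) :=
    qq_one_eq_of_mul_self (hinvq (k - 1) (by omega) (by omega))
  refine ⟨PresentedGroup.toGroup hrel, ?_, fun k hk hkn => ?_, fun i j hi hij hjn => ?_⟩
  · rw [← MonoidHom.range_eq_top, eq_top_iff, ← hgen, PresentedGroup.range_toGroup]
    refine Subgroup.closure_mono ?_
    rintro _ ⟨i, hi1, hi2, rfl⟩
    refine ⟨(1, i + 1), ?_⟩
    rw [cactusImage_eq_qq le_rfl (by omega) (by omega), hq_one (by omega) (by omega),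
      Nat.add_sub_cancel]
  · exact (PresentedGroup.toGroup.of hrel).trans
      ((cactusImage_eq_qq le_rfl (by omega) hkn).trans (hq_one hk hkn))
  · exact (PresentedGroup.toGroup.of hrel).trans (cactusImage_eq_qq (by omega) hij hjn)

/-- If `G` is generated by involutions `q_1, …, q_{n-1}` and the elements
`q_{i,j} = q_{j-1} q_{j-i} q_{j-1}` satisfy the cactus relations, then the
assignment `s_{1,k} ↦ q_{k-1}`, `s_{i,j} ↦ q_{j-1} q_{j-i} q_{j-1}` extends to
a surjective group homomorphism `J_n → G`. -/
theorem cactus_hom_exists {G : Type*} [Group G] (n : ℕ) (q : ℕ → G)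
    (hq0 : q 0 = 1)
    (hgen : Subgroup.closure {g : G | ∃ i, 1 ≤ i ∧ i ≤ n - 1 ∧ g = q i} = ⊤)
    (hinvq : ∀ i, 1 ≤ i → i ≤ n - 1 → q i * q i = 1)
    (hinv : ∀ i j, 1 ≤ i → i < j → j ≤ n → qq q i j * qq q i j = 1)
    (hnest : ∀ i j k l, 1 ≤ i → i ≤ k → k < l → l ≤ j → i < j → j ≤ n →
      qq q i j * qq q k l * qq q i j = qq q (i + j - l) (i + j - k))
    (hdisj : ∀ i j k l, 1 ≤ i → i < j → j < k → k < l → l ≤ n →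
      qq q i j * qq q k l = qq q k l * qq q i j) :
    ∃ φ : CactusGroup n →* G,
      Function.Surjective φ ∧
      (∀ k, 2 ≤ k → k ≤ n → φ (cactusGen n 1 k) = q (k - 1)) ∧
      (∀ i j, 1 < i → i < j → j ≤ n → φ (cactusGen n i j) = qq q i j) :=
  cactus_hom_exists_general n q hgen hinvq hinv hnest hdisj
end
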